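/- The holomorphic vector field X = zw∂/∂z − iz^2∂/∂ζ + w^2∂/∂w (the generator of the weight-2 component g_2) is an infinitesimal automorphism of the model hypersurface {Im w = P}: Re((1/(2i))w^2 − zwP_z + iz^2P_ζ) = 0 whenever Im w = P(z,ζ,\bar z,\bar ζ). -/

import Mathlib

open Complex

noncomputable def P4 (z ζ zb ζb : ℂ) : ℂ :=
  (z * zb + (z ^ 2 * ζb + zb ^ 2 * ζ) / 2) / (1 - ζ * ζb)

noncomputable def Pz (z ζ zb ζb : ℂ) : ℂ :=
  deriv (fun s => P4 s ζ zb ζb) z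

noncomputable def Pzeta (z ζ zb ζb : ℂ) : ℂ :=
  deriv (fun s => P4 z s zb ζb) ζ

/-! On the hypersurface `w = u + iP` we have `Re (w² / (2i)) = u P`, and since `P` is real and
homogeneous of degree two in `(z, z̄)`, Euler's relation gives `Re (z P_z) = P`; so the terms in `u`
cancel. What remains is `P · Im (z P_z) - Im (z² P_ζ)`, which vanishes because
`z² P_ζ - P · z P_z = |z|² (|z|² / 2 - P) / (1 - |ζ|²)` is real. -/

open ComplexConjugate

noncomputable def P (z ζ : ℂ) : ℝ :=
  (normSq z + (z ^ 2 * conj ζ).re) / (1 - normSq ζ)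

lemma one_sub_mul_conj (ζ : ℂ) : 1 - ζ * conj ζ = ((1 - normSq ζ : ℝ) : ℂ) := by
  rw [mul_conj]; push_cast; rfl

lemma P4_conj (z ζ : ℂ) : P4 z ζ (conj z) (conj ζ) = P z ζ := by
  have hpolar : conj z ^ 2 * ζ = conj (z ^ 2 * conj ζ) := by simp
  rw [P4, P, hpolar, add_conj, mul_conj, one_sub_mul_conj]
  push_cast; ring

lemma hasDerivAt_P4_fst (z ζ zb ζb : ℂ) :
    HasDerivAt (fun s => P4 s ζ zb ζb) ((zb + z * ζb) / (1 - ζ * ζb)) z := by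
  have h : HasDerivAt (fun s => P4 s ζ zb ζb) _ z :=
    (((hasDerivAt_id' z).mul_const zb).add
      ((((hasDerivAt_pow 2 z).mul_const ζb).add_const (zb ^ 2 * ζ)).div_const 2)).div_const _
  exact h.congr_deriv (by norm_num; ring)

lemma Pz_eq (z ζ zb ζb : ℂ) : Pz z ζ zb ζb = (zb + z * ζb) / (1 - ζ * ζb) :=
  (hasDerivAt_P4_fst z ζ zb ζb).deriv

lemma hasDerivAt_P4_snd (z ζ zb ζb : ℂ) (h : 1 - ζ * ζb ≠ 0) :
    HasDerivAt (fun s => P4 z s zb ζb) ((zb ^ 2 / 2 + P4 z ζ zb ζb * ζb) / (1 - ζ * ζb)) ζ := by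
  have hN := ((((hasDerivAt_id' ζ).const_mul (zb ^ 2)).const_add (z ^ 2 * ζb)).div_const 2).const_add
    (z * zb)
  have hD := ((hasDerivAt_id' ζ).mul_const ζb).const_sub 1
  have h' : HasDerivAt (fun s => P4 z s zb ζb) _ ζ := hN.div hD h
  exact h'.congr_deriv (by unfold P4; field_simp; ring)

lemma Pzeta_eq (z ζ zb ζb : ℂ) (h : 1 - ζ * ζb ≠ 0) :
    Pzeta z ζ zb ζb = (zb ^ 2 / 2 + P4 z ζ zb ζb * ζb) / (1 - ζ * ζb) :=
  (hasDerivAt_P4_snd z ζ zb ζb h).deriv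

lemma mul_Pz_conj (z ζ : ℂ) :
    z * Pz z ζ (conj z) (conj ζ) = (normSq z + z ^ 2 * conj ζ) / ((1 - normSq ζ : ℝ) : ℂ) := by
  rw [Pz_eq, one_sub_mul_conj, mul_div_assoc', mul_add, mul_conj]; ring

lemma re_mul_Pz_conj (z ζ : ℂ) : (z * Pz z ζ (conj z) (conj ζ)).re = P z ζ := by
  rw [mul_Pz_conj, div_ofReal_re, P]; simp

lemma im_sq_mul_Pzeta_conj (z ζ : ℂ) (hζ : normSq ζ ≠ 1) :
    (z ^ 2 * Pzeta z ζ (conj z) (conj ζ)).im = P z ζ * (z * Pz z ζ (conj z) (conj ζ)).im := by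
  have hd : 1 - ζ * conj ζ ≠ 0 := by
    rw [one_sub_mul_conj]; exact_mod_cast sub_ne_zero.mpr hζ.symm
  have key : z ^ 2 * Pzeta z ζ (conj z) (conj ζ)
      = ((normSq z ^ 2 / 2 : ℝ) + P z ζ * (z ^ 2 * conj ζ)) / ((1 - normSq ζ : ℝ) : ℂ) := by
    rw [Pzeta_eq _ _ _ _ hd, P4_conj, one_sub_mul_conj, ofReal_div, ofReal_pow, ofReal_ofNat,
      ← mul_conj]
    ring
  rw [key, mul_Pz_conj, div_ofReal_im, div_ofReal_im, add_im, add_im, ofReal_im, ofReal_im,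
    im_ofReal_mul]
  ring

lemma re_tangency_eq_zero (u p : ℝ) (a b : ℂ) (ha : a.re = p) (hb : b.im = p * a.im) :
    ((1 / (2 * I)) * ((u : ℂ) + I * p) ^ 2 - ((u : ℂ) + I * p) * a + I * b).re = 0 := by
  have h2I : 1 / (2 * I) = ((-1 / 2 : ℝ) : ℂ) * I := by
    rw [one_div, mul_inv, inv_I]; push_cast; ring
  simp only [h2I, sq, add_re, sub_re, mul_re, add_im, mul_im, I_re, I_im, ofReal_re, ofReal_im,
    ha, hb]
  ring

/-- the field `X = zw∂/∂z - iz²∂/∂ζ + w²∂/∂w` (the generator of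
`g₂`) is an infinitesimal automorphism of `{Im w = P}`:
`Re((1/(2i))w² - zwP_z + iz²P_ζ) = 0` for `w = u + iP`, all real `u`. -/
theorem infinitesimal_autom_g2 (z ζ : ℂ) (u : ℝ) (hζ : ‖ζ‖ < 1) :
    (((1 / (2 * I)) * ((u : ℂ) + I * P4 z ζ ((starRingEnd ℂ) z) ((starRingEnd ℂ) ζ)) ^ 2
      - z * ((u : ℂ) + I * P4 z ζ ((starRingEnd ℂ) z) ((starRingEnd ℂ) ζ)) * Pz z ζ ((starRingEnd ℂ) z) ((starRingEnd ℂ) ζ)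
      + I * z ^ 2 * Pzeta z ζ ((starRingEnd ℂ) z) ((starRingEnd ℂ) ζ))).re = 0 := by
  have hζ' : normSq ζ ≠ 1 := by
    rw [normSq_eq_norm_sq]; nlinarith [norm_nonneg ζ]
  rw [P4_conj]
  convert re_tangency_eq_zero u (P z ζ) _ _ (re_mul_Pz_conj z ζ)
    (im_sq_mul_Pzeta_conj z ζ hζ') using 2
  ring
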